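/- Let E = ℝⁿ with n ≥ 1 and let 0 < L < 1. Define F : E → E by F x = ((1 + L)/(1 − L))·x. Then: (a) for all x, x − F x = −L·(x + F x), so F is the monotone formulation of the L-Lipschitz map G x = −L·x and satisfies ‖(F x₁ − F x₂) − (x₁ − x₂)‖ ≤ L‖(F x₁ − F x₂) + (x₁ − x₂)‖ for all x₁, x₂ (membership in M_L); (b) F − id is not L-Lipschitz (its Lipschitz constant is 2L/(1 − L) > L), so F ∉ R_L; and (c) (1 − L²)·F − id is not L-Lipschitz (its Lipschitz constant is 2L + L² > L), so F ∉ I_L. Hence the inclusions R_L ⊊ M_L and I_L ⊊ M_L are strict. -/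

import Mathlib

/-! F is the scaling by c = (1 + L)/(1 - L), the number characterised by c - 1 = L (c + 1).
That identity yields both the monotone-formulation equation and the `M_L` inequality (with
equality). The maps F - id and (1 - L²) F - id are the scalings by c - 1 = 2L/(1 - L) and
(1 - L²) c - 1 = 2L + L², both larger than L, while on a nonzero space the scaling by a is
L-Lipschitz only if |a| ≤ L. -/

section ScalarMaps

variable {E : Type*} [NormedAddCommGroup E] [NormedSpace ℝ E]

theorem sub_smul_self_eq_neg_smul_add {c L : ℝ} (hc : c - 1 = L * (c + 1)) (x : E) :
    x - c • x = (-L) • (x + c • x) := by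
  linear_combination (norm := module) (-hc) • x

theorem norm_smul_sub_self_eq_mul_norm_smul_add_self {c L : ℝ} (hL : 0 ≤ L)
    (hc : c - 1 = L * (c + 1)) (v : E) : ‖c • v - v‖ = L * ‖c • v + v‖ := by
  calc ‖c • v - v‖ = ‖(L * (c + 1)) • v‖ := by rw [← hc, sub_smul, one_smul]
    _ = L * ‖c • v + v‖ := by
      rw [mul_smul, norm_smul, Real.norm_of_nonneg hL, add_smul, one_smul]

theorem abs_le_of_forall_norm_sub_le [Nontrivial E] {G : E → E} {a L : ℝ}
    (hG : ∀ x, G x = a • x) (h : ∀ x y, ‖G x - G y‖ ≤ L * ‖x - y‖) : |a| ≤ L := by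
  obtain ⟨v, hv⟩ := exists_ne (0 : E)
  have hv' := h v 0
  rw [hG, hG, smul_zero, sub_zero, sub_zero, norm_smul, Real.norm_eq_abs] at hv'
  exact le_of_mul_le_mul_right hv' (norm_pos_iff.2 hv)

end ScalarMaps

theorem strict_inclusion_witness
    (n : ℕ) (hn : 1 ≤ n) (L : ℝ) (hL0 : 0 < L) (hL1 : L < 1)
    (F : EuclideanSpace ℝ (Fin n) → EuclideanSpace ℝ (Fin n))
    (hF : ∀ x, F x = ((1 + L) / (1 - L)) • x) :
    (∀ x, x - F x = (-L) • (x + F x)) ∧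
    (∀ x₁ x₂, ‖(F x₁ - F x₂) - (x₁ - x₂)‖ ≤ L * ‖(F x₁ - F x₂) + (x₁ - x₂)‖) ∧
    ¬(∀ x y, ‖(F x - x) - (F y - y)‖ ≤ L * ‖x - y‖) ∧
    ¬(∀ x y, ‖((1 - L ^ 2) • F x - x) - ((1 - L ^ 2) • F y - y)‖ ≤ L * ‖x - y‖) := by
  have : Nonempty (Fin n) := ⟨⟨0, hn⟩⟩
  set c := (1 + L) / (1 - L)
  have hc_pos : 0 < c := div_pos (by linarith) (by linarith)
  have hc_mul : (1 - L) * c = 1 + L := mul_div_cancel₀ _ (by linarith)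
  have hc : c - 1 = L * (c + 1) := by linear_combination hc_mul
  refine ⟨fun x => ?_, fun x₁ x₂ => ?_, fun h => ?_, fun h => ?_⟩
  · rw [hF]
    exact sub_smul_self_eq_neg_smul_add hc x
  · simp only [hF, ← smul_sub]
    exact (norm_smul_sub_self_eq_mul_norm_smul_add_self hL0.le hc _).le
  · have hle := abs_le_of_forall_norm_sub_le (a := c - 1)
      (fun x => by rw [hF, sub_smul, one_smul]) h
    nlinarith [le_abs_self (c - 1)]
  · have hle := abs_le_of_forall_norm_sub_le (a := (1 - L ^ 2) * c - 1)
      (fun x => by rw [hF, smul_smul, sub_smul, one_smul]) h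
    nlinarith [le_abs_self ((1 - L ^ 2) * c - 1)]
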